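/- (Example 5.9(2), failure of the annulus to be a spectral domain.) For every real r with 0 < r < 2^{1/3} − 1 there exists a 2×2 complex matrix T, diagonalizable with two distinct eigenvalues z, w lying in the annulus A(r) := {ζ ∈ ℂ : r < |ζ| < 1}, satisfying ‖T‖ ≤ 1 and ‖r·T^{−1}‖ ≤ 1, such that A(r) is not a spectral domain for T: there exists a bounded holomorphic function f : A(r) → ℂ with ‖f(T)‖ > sup_{ζ ∈ A(r)} |f(ζ)|, where f(T) is the 2×2 matrix acting on the eigenvectors v_1, v_2 of T by f(T)v_1 = f(z)v_1, f(T)v_2 = f(w)v_2. -/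

import Mathlib

open scoped Matrix.Norms.L2Operator ComplexOrder
open Matrix

noncomputable section

/-- The positive semidefinite square root of a positive semidefinite matrix, as
`Matrix.PosSemidef.sqrt` was defined in the older Mathlib (removed since). -/
def posSemidefSqrt {n' : Type*} [Fintype n'] [DecidableEq n'] {M : Matrix n' n' ℂ}
    (hM : M.PosSemidef) : Matrix n' n' ℂ :=
  hM.1.eigenvectorUnitary.1 * diagonal ((↑) ∘ (Real.sqrt) ∘ hM.1.eigenvalues) *
  (star hM.1.eigenvectorUnitary : Matrix n' n' ℂ)

open scoped Classical in
/-- Square root of a positive semidefinite matrix (junk value `0` otherwise). -/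
def msqrt {n' : Type*} [Fintype n'] [DecidableEq n'] (M : Matrix n' n' ℂ) : Matrix n' n' ℂ :=
  if h : M.PosSemidef then posSemidefSqrt h else 0

/-- The pseudo-distance `d_Δ`. -/
def dDelta {α m' n' : Type*} [Fintype m'] [Fintype n'] [DecidableEq m'] [DecidableEq n']
    (Δ : α → Matrix m' n' ℂ) (z w : α) : ℝ :=
  ‖(msqrt (1 - Δ w * (Δ w)ᴴ))⁻¹ * ((Δ z - Δ w) *
      ((1 - (Δ w)ᴴ * Δ z)⁻¹ * msqrt (1 - (Δ w)ᴴ * Δ w)))‖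

/-- `B_Δ = {z ∈ E : ‖Δ(z)‖ < 1}`. -/
def BDelta {α m' n' : Type*} [Fintype m'] [Fintype n'] [DecidableEq n'] (E : Set α)
    (Δ : α → Matrix m' n' ℂ) : Set α :=
  {z | z ∈ E ∧ ‖Δ z‖ < 1}

/-- pseudo-hyperbolic distance on the unit disk -/
def dDisk (a b : ℂ) : ℝ := ‖a - b‖ / ‖1 - (starRingEnd ℂ) b * a‖

/-- elementary tensor `ξ ⊗ v` in `ℂ^m ⊗ ℂ^2`, realized as a function on `m × Fin 2` -/
def tpr {m' : Type*} (ξ : m' → ℂ) (v : Fin 2 → ℂ) : m' × Fin 2 → ℂ :=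
  fun p => ξ p.1 * v p.2

/-- inner product, conjugate-linear in the second variable -/
def herm {m' : Type*} [Fintype m'] (ξ η : m' → ℂ) : ℂ :=
  ∑ p, ξ p * (starRingEnd ℂ) (η p)

/-- positive semidefiniteness of a `2 × 2` kernel `(a i j)` -/
def PSD2 (a : Fin 2 → Fin 2 → ℂ) : Prop :=
  ∀ c : Fin 2 → ℂ, 0 ≤ ∑ i, ∑ j, a i j * c i * (starRingEnd ℂ) (c j)

/-- `T` is a generic tuple with joint eigenvectors `v` and joint eigenvalues `z 0 ≠ z 1`. -/
def IsGenericTuple {d : ℕ} (T : Fin d → Matrix (Fin 2) (Fin 2) ℂ)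
    (v : Fin 2 → Fin 2 → ℂ) (z : Fin 2 → Fin d → ℂ) : Prop :=
  LinearIndependent ℂ v ∧ z 0 ≠ z 1 ∧ ∀ i j, T i *ᵥ v j = z j i • v j

/-- `‖Δ(T)‖ ≤ 1`, where `Δ(T)` is the matrix on `ℂ^s ⊗ ℂ^2` determined by
`Δ(T)(e_i ⊗ v_j) = (Δ(z_j) e_i) ⊗ v_j`. -/
def DeltaTContract {β : Type*} {s r : ℕ} (Δ : β → Matrix (Fin s) (Fin r) ℂ)
    (v : Fin 2 → Fin 2 → ℂ) (z : Fin 2 → β) : Prop :=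
  ∀ DT : Matrix (Fin s × Fin 2) (Fin r × Fin 2) ℂ,
    (∀ (i : Fin r) (j : Fin 2),
      DT *ᵥ tpr (Pi.single i 1) (v j) = tpr (Δ (z j) *ᵥ Pi.single i 1) (v j)) →
    ‖DT‖ ≤ 1

/-- membership in the class `S_{2,gen}(B_Δ)` -/
def MemS2gen {d s r : ℕ} (E : Set (Fin d → ℂ)) (Δ : (Fin d → ℂ) → Matrix (Fin s) (Fin r) ℂ)
    (f : (Fin d → ℂ) → ℂ) : Prop :=
  ∀ (T : Fin d → Matrix (Fin 2) (Fin 2) ℂ) (v : Fin 2 → Fin 2 → ℂ) (z : Fin 2 → Fin d → ℂ),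
    IsGenericTuple T v z → (∀ j, z j ∈ BDelta E Δ) → DeltaTContract Δ v z →
    ∀ fT : Matrix (Fin 2) (Fin 2) ℂ, (∀ j, fT *ᵥ v j = f (z j) • v j) → ‖fT‖ ≤ 1

/-- the Möbius pseudo-distance of a domain `Ω` -/
def dMobius {α : Type*} [NormedAddCommGroup α] [NormedSpace ℂ α] (Ω : Set α) (z w : α) : ℝ :=
  sSup {x | ∃ g : α → ℂ, DifferentiableOn ℂ g Ω ∧ (∀ ζ ∈ Ω, ‖g ζ‖ < 1) ∧ x = dDisk (g z) (g w)}

/-- `Ω` is a complete spectral domain for the diagonalizable tuple with eigenvectors `v` and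
joint eigenvalues `z 0, z 1`. -/
def IsCompleteSpectralDomainFor {α : Type*} [NormedAddCommGroup α] [NormedSpace ℂ α]
    (Ω : Set α) (v : Fin 2 → Fin 2 → ℂ) (z : Fin 2 → α) : Prop :=
  ∀ (n : ℕ) (F : α → Matrix (Fin n) (Fin n) ℂ),
    (∀ i j, DifferentiableOn ℂ (fun ζ => F ζ i j) Ω) →
    ∀ C : ℝ, (∀ ζ ∈ Ω, ‖F ζ‖ ≤ C) →
    ∀ FT : Matrix (Fin n × Fin 2) (Fin n × Fin 2) ℂ,
      (∀ (ξ : Fin n → ℂ) (j : Fin 2), FT *ᵥ tpr ξ (v j) = tpr (F (z j) *ᵥ ξ) (v j)) →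
      ‖FT‖ ≤ C

/-
With `s = √r`, the upper triangular matrix `T = [[s, 1 - s²], [0, -s]]` has eigenvalues `±s` in
the annulus and satisfies `T² = r`, so `r T⁻¹ = T`; moreover `‖T‖ = 1` (the eigenvalues of `Tᴴ T`
are `1` and `s⁴`). The function `f ζ = ζ + r / ζ` is bounded by `1 + r` on the annulus, while
`f(T) = T + r T⁻¹ = 2 T` has norm `2 > 1 + r`.
-/

section

variable {𝕜 m n : Type*} [RCLike 𝕜] [Fintype m] [Fintype n] [DecidableEq n]

lemma Matrix.l2_opNorm_le_of_norm_mulVec_le {A : Matrix m n 𝕜} {C : ℝ} (hC : 0 ≤ C)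
    (h : ∀ x : EuclideanSpace 𝕜 n, ‖(EuclideanSpace.equiv m 𝕜).symm (A *ᵥ x)‖ ≤ C * ‖x‖) :
    ‖A‖ ≤ C := by
  rw [l2_opNorm_def]
  exact ContinuousLinearMap.opNorm_le_bound _ hC h

lemma Matrix.one_le_l2_opNorm_of_norm_mulVec_eq {A : Matrix m n 𝕜} {x : EuclideanSpace 𝕜 n}
    (hx : x ≠ 0) (h : ‖(EuclideanSpace.equiv m 𝕜).symm (A *ᵥ x)‖ = ‖x‖) : 1 ≤ ‖A‖ := by
  have := A.l2_opNorm_mulVec x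
  rw [h] at this
  exact le_of_mul_le_mul_right (by simpa using this) (norm_pos_iff.2 hx)

lemma Matrix.eq_of_mulVec_eq_of_linearIndependent {K : Type*} [Field K] {A B : Matrix n n K}
    {v : n → n → K} (hv : LinearIndependent K v) (h : ∀ j, A *ᵥ v j = B *ᵥ v j) : A = B := by
  let b := basisOfLinearIndependentOfCardEqFinrank' v hv (Module.finrank_fintype_fun_eq_card K).symm
  exact Matrix.toLin'.injective (b.ext fun j => by simpa [b] using h j)

end

def annulusExample (s : ℝ) : Matrix (Fin 2) (Fin 2) ℂ := !![(s : ℂ), 1 - s ^ 2; 0, -s]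

def annulusExampleEigenvectors (s : ℝ) : Fin 2 → Fin 2 → ℂ := ![![1, 0], ![1 - s ^ 2, -2 * s]]

section

variable (s : ℝ)

lemma annulusExample_mul_self : annulusExample s * annulusExample s = (s ^ 2 : ℂ) • 1 := by
  ext i j
  fin_cases i <;> fin_cases j <;> simp [annulusExample] <;> ring

lemma annulusExample_mulVec_eigenvectors_zero :
    annulusExample s *ᵥ annulusExampleEigenvectors s 0 =
      (s : ℂ) • annulusExampleEigenvectors s 0 := by
  ext i
  fin_cases i <;> simp [annulusExample, annulusExampleEigenvectors]

lemma annulusExample_mulVec_eigenvectors_one :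
    annulusExample s *ᵥ annulusExampleEigenvectors s 1 =
      (-s : ℂ) • annulusExampleEigenvectors s 1 := by
  ext i
  fin_cases i <;> simp [annulusExample, annulusExampleEigenvectors] <;> ring

variable {s}

lemma smul_inv_annulusExample (hs : s ≠ 0) :
    (s ^ 2 : ℂ) • (annulusExample s)⁻¹ = annulusExample s := by
  have hs2 : (s ^ 2 : ℂ) ≠ 0 := by exact_mod_cast pow_ne_zero 2 hs
  have hleft : ((s ^ 2 : ℂ)⁻¹ • annulusExample s) * annulusExample s = 1 := by
    rw [smul_mul_assoc, annulusExample_mul_self, inv_smul_smul₀ hs2]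
  rw [inv_eq_left_inv hleft, smul_inv_smul₀ hs2]

lemma linearIndependent_annulusExampleEigenvectors (hs : s ≠ 0) :
    LinearIndependent ℂ (annulusExampleEigenvectors s) := by
  refine linearIndependent_fin2.2 ⟨fun h => ?_, fun a h => ?_⟩
  · simpa [annulusExampleEigenvectors, hs] using congrFun h 1
  · have ha : a = 0 := by simpa [annulusExampleEigenvectors, hs] using congrFun h 1
    simpa [annulusExampleEigenvectors, ha] using congrFun h 0

lemma one_le_norm_annulusExample : 1 ≤ ‖annulusExample s‖ := by
  refine one_le_l2_opNorm_of_norm_mulVec_eq (x := !₂[(s : ℂ), 1]) (by simp) ?_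
  have : (s : ℂ) * s + (1 - s ^ 2) = 1 := by ring
  simp [EuclideanSpace.norm_eq, annulusExample, this, add_comm]

lemma norm_annulusExample_le_one (hs0 : 0 ≤ s) (hs1 : s ≤ 1) : ‖annulusExample s‖ ≤ 1 := by
  refine l2_opNorm_le_of_norm_mulVec_le zero_le_one fun x => ?_
  rw [← sq_le_sq₀ (norm_nonneg _) (by positivity), mul_pow, one_pow, one_mul,
    EuclideanSpace.norm_sq_eq, EuclideanSpace.norm_sq_eq, Fin.sum_univ_two, Fin.sum_univ_two]
  have hx0 : ‖(annulusExample s *ᵥ x) 0‖ ≤ s * ‖x 0‖ + (1 - s ^ 2) * ‖x 1‖ := by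
    have hs2 : ((1 - s ^ 2 : ℝ) : ℂ) = 1 - (s : ℂ) ^ 2 := by push_cast; ring
    calc ‖(annulusExample s *ᵥ x) 0‖ = ‖(s : ℂ) * x 0 + ((1 - s ^ 2 : ℝ) : ℂ) * x 1‖ := by
          simp [annulusExample, mulVec, dotProduct, Fin.sum_univ_two, hs2]
      _ ≤ s * ‖x 0‖ + (1 - s ^ 2) * ‖x 1‖ := by
          refine (norm_add_le _ _).trans_eq ?_
          rw [norm_mul, norm_mul, Complex.norm_real, Complex.norm_real, Real.norm_of_nonneg hs0,
            Real.norm_of_nonneg (by nlinarith)]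
  have hx1 : ‖(annulusExample s *ᵥ x) 1‖ = s * ‖x 1‖ := by
    simp [annulusExample, mulVec, dotProduct, Fin.sum_univ_two, abs_of_nonneg hs0]
  change ‖(annulusExample s *ᵥ x) 0‖ ^ 2 + ‖(annulusExample s *ᵥ x) 1‖ ^ 2 ≤ _
  rw [hx1]
  -- `‖x‖² - ‖T x‖² ≥ (1 - s²) (‖x 0‖ - s ‖x 1‖)²`
  nlinarith [mul_nonneg (by nlinarith : 0 ≤ 1 - s ^ 2) (sq_nonneg (‖x 0‖ - s * ‖x 1‖)),
    pow_le_pow_left₀ (norm_nonneg _) hx0 2, norm_nonneg (x 0), norm_nonneg (x 1)]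

lemma norm_annulusExample (hs0 : 0 ≤ s) (hs1 : s ≤ 1) : ‖annulusExample s‖ = 1 :=
  (norm_annulusExample_le_one hs0 hs1).antisymm one_le_norm_annulusExample

lemma eq_two_smul_annulusExample (hs : s ≠ 0) {F : Matrix (Fin 2) (Fin 2) ℂ}
    (h0 : F *ᵥ annulusExampleEigenvectors s 0 = (2 * s : ℂ) • annulusExampleEigenvectors s 0)
    (h1 : F *ᵥ annulusExampleEigenvectors s 1 = (-(2 * s) : ℂ) • annulusExampleEigenvectors s 1) :
    F = (2 : ℂ) • annulusExample s := by
  refine eq_of_mulVec_eq_of_linearIndependent (linearIndependent_annulusExampleEigenvectors hs)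
    (Fin.forall_fin_two.2 ⟨?_, ?_⟩)
  · rw [h0, smul_mulVec, annulusExample_mulVec_eigenvectors_zero, smul_smul]
  · rw [h1, smul_mulVec, annulusExample_mulVec_eigenvectors_one, smul_smul, mul_neg]

end

lemma differentiableOn_add_div (c : ℂ) : DifferentiableOn ℂ (fun ζ : ℂ => ζ + c / ζ) {0}ᶜ :=
  fun _ hζ => (differentiableAt_id.add
    ((differentiableAt_const c).div differentiableAt_id hζ)).differentiableWithinAt

lemma norm_add_div_le_one_add {r : ℝ} {ζ : ℂ} (hr : 0 ≤ r) (hζr : r < ‖ζ‖) (hζ1 : ‖ζ‖ ≤ 1) :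
    ‖ζ + r / ζ‖ ≤ 1 + r := by
  have hζ0 : 0 < ‖ζ‖ := hr.trans_lt hζr
  have : r / ‖ζ‖ ≤ 1 + r - ‖ζ‖ := by
    rw [div_le_iff₀ hζ0]
    nlinarith
  calc ‖ζ + r / ζ‖ ≤ ‖ζ‖ + ‖(r : ℂ) / ζ‖ := norm_add_le _ _
    _ = ‖ζ‖ + r / ‖ζ‖ := by rw [norm_div, Complex.norm_real, Real.norm_of_nonneg hr]
    _ ≤ 1 + r := by linarith

/-- **Example 5.9(2)**: failure of the annulus to be a spectral domain: for
`0 < r < 2^{1/3} − 1` there is a diagonalizable `T` with eigenvalues in `A(r)`, `‖T‖ ≤ 1` and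
`‖r T⁻¹‖ ≤ 1` for which `A(r)` is not a spectral domain. -/
theorem annulus_not_spectral_domain (r : ℝ) (hr0 : 0 < r)
    (hr1 : r < (2 : ℝ) ^ ((1 : ℝ) / 3) - 1) :
    ∃ (T : Matrix (Fin 2) (Fin 2) ℂ) (v : Fin 2 → Fin 2 → ℂ) (z w : ℂ),
      LinearIndependent ℂ v ∧ z ≠ w ∧
      (r < ‖z‖ ∧ ‖z‖ < 1) ∧ (r < ‖w‖ ∧ ‖w‖ < 1) ∧
      T *ᵥ v 0 = z • v 0 ∧ T *ᵥ v 1 = w • v 1 ∧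
      ‖T‖ ≤ 1 ∧ ‖(r : ℂ) • T⁻¹‖ ≤ 1 ∧
      ∃ f : ℂ → ℂ, DifferentiableOn ℂ f {ζ : ℂ | r < ‖ζ‖ ∧ ‖ζ‖ < 1} ∧
        (∃ Cb : ℝ, ∀ ζ : ℂ, r < ‖ζ‖ → ‖ζ‖ < 1 → ‖f ζ‖ ≤ Cb) ∧
        ∀ fT : Matrix (Fin 2) (Fin 2) ℂ,
          fT *ᵥ v 0 = f z • v 0 → fT *ᵥ v 1 = f w • v 1 →
          sSup {x | ∃ ζ : ℂ, (r < ‖ζ‖ ∧ ‖ζ‖ < 1) ∧ x = ‖f ζ‖} < ‖fT‖ := by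
  have hr : r < 1 := by
    linarith [Real.rpow_lt_self_of_one_lt one_lt_two (by norm_num : (1 : ℝ) / 3 < 1)]
  set s := √r
  have hs0 : 0 < s := Real.sqrt_pos.2 hr0
  have hs : r < s ∧ s < 1 :=
    ⟨Real.lt_sqrt_of_sq_lt (by nlinarith), (Real.sqrt_lt' one_pos).2 (by linarith)⟩
  have hrs : (r : ℂ) = (s : ℂ) ^ 2 := by rw [← Complex.ofReal_pow, Real.sq_sqrt hr0.le]
  have hsc : (s : ℂ) ≠ 0 := by exact_mod_cast hs0.ne'
  refine ⟨annulusExample s, annulusExampleEigenvectors s, s, -s,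
    linearIndependent_annulusExampleEigenvectors hs0.ne',
    fun h => hsc (by linear_combination h / 2),
    by simpa [abs_of_pos hs0] using hs, by simpa [abs_of_pos hs0] using hs,
    annulusExample_mulVec_eigenvectors_zero s, annulusExample_mulVec_eigenvectors_one s,
    (norm_annulusExample hs0.le hs.2.le).le,
    by rw [hrs, smul_inv_annulusExample hs0.ne', norm_annulusExample hs0.le hs.2.le],
    fun ζ => ζ + r / ζ,
    (differentiableOn_add_div r).mono fun ζ hζ => norm_pos_iff.1 (hr0.trans hζ.1),
    ⟨1 + r, fun ζ hζr hζ1 => norm_add_div_le_one_add hr0.le hζr hζ1.le⟩, fun fT h0 h1 => ?_⟩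
  have hfT : fT = (2 : ℂ) • annulusExample s := by
    refine eq_two_smul_annulusExample hs0.ne' (h0.trans ?_) (h1.trans ?_) <;>
      · congr 1
        rw [hrs]
        field_simp
        ring
  calc sSup {x | ∃ ζ : ℂ, (r < ‖ζ‖ ∧ ‖ζ‖ < 1) ∧ x = ‖ζ + r / ζ‖} ≤ 1 + r :=
        Real.sSup_le (fun _ ⟨ζ, ⟨hζr, hζ1⟩, hx⟩ => hx ▸ norm_add_div_le_one_add hr0.le hζr hζ1.le)
          (by linarith)
    _ < 2 := by linarith
    _ = ‖fT‖ := by simp [hfT, norm_smul, norm_annulusExample hs0.le hs.2.le]
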